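/- arXiv:2305.15776 — 8 statements merged into one kernel-verified Lean document; each statement's English description precedes it below -/
import Mathlib

section
/- If f is tie-free, then for any priors π_i, π_j ∈ [0,1] the U² AUC risk is an affine function of the PN-AUC risk: R_ij(f) = (π_i − π_j)·R_PN(f) + C_ij, where C_ij = (π_i·π_j + (1−π_i)·(1−π_j))/2 + (1−π_i)·π_j is a constant not depending on f. -/
open MeasureTheory

/-- The ranking risk `R(μ,ν)(f) = (μ ⊗ ν){(x,x') : f(x) < f(x')}` (as a real number). -/
noncomputable def rankRisk {X : Type*} [MeasurableSpace X]
    (μ ν : Measure X) (f : X → ℝ) : ℝ :=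
  ((μ.prod ν) {p : X × X | f p.1 < f p.2}).toReal

/-- The mixture `p_π = π·p_P + (1−π)·p_N`. -/
noncomputable def mix {X : Type*} [MeasurableSpace X]
    (pP pN : Measure X) (π : ℝ) : Measure X :=
  ENNReal.ofReal π • pP + ENNReal.ofReal (1 - π) • pN

/-- `f` is tie-free: ties have probability zero under every product of the
class-conditional distributions. -/
def TieFree {X : Type*} [MeasurableSpace X] (pP pN : Measure X) (f : X → ℝ) : Prop :=
  ∀ μ ∈ ({pP, pN} : Set (Measure X)), ∀ ν ∈ ({pP, pN} : Set (Measure X)),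
    (μ.prod ν) {p : X × X | f p.1 = f p.2} = 0

/-!
The product measure is bilinear, so `R(p_{π_i}, p_{π_j})` is the `π`-weighted sum of the four
risks `R(p_a, p_b)`, `a, b ∈ {P, N}`. For tie-free `f` the events `f x < f x'` and `f x' < f x`
partition the square up to a null set, so `R(μ,ν) + R(ν,μ) = 1`; hence
`R(p_P,p_P) = R(p_N,p_N) = 1/2` and `R(p_N,p_P) = 1 - R_PN`.
-/

open Set

section

variable {X : Type*} [MeasurableSpace X] {f : X → ℝ}

lemma rankRisk_eq_measureReal (μ ν : Measure X) (f : X → ℝ) :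
    rankRisk μ ν f = (μ.prod ν).real {p : X × X | f p.1 < f p.2} :=
  rfl

lemma mix_prod (pP pN ν : Measure X) [SFinite pP] [SFinite pN] [SFinite ν] (π : ℝ) :
    (mix pP pN π).prod ν =
      ENNReal.ofReal π • pP.prod ν + ENNReal.ofReal (1 - π) • pN.prod ν := by
  simp only [mix, Measure.add_prod, Measure.prod_smul_left]

lemma prod_mix (μ pP pN : Measure X) [SFinite μ] [SFinite pP] [SFinite pN] (π : ℝ) :
    μ.prod (mix pP pN π) =
      ENNReal.ofReal π • μ.prod pP + ENNReal.ofReal (1 - π) • μ.prod pN := by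
  simp only [mix, Measure.prod_add, Measure.prod_smul_right]

lemma measureReal_ofReal_smul_add_ofReal_smul {μ₁ μ₂ : Measure X} [IsFiniteMeasure μ₁]
    [IsFiniteMeasure μ₂] {a b : ℝ} (ha : 0 ≤ a) (hb : 0 ≤ b) (s : Set X) :
    (ENNReal.ofReal a • μ₁ + ENNReal.ofReal b • μ₂).real s =
      a * μ₁.real s + b * μ₂.real s := by
  simp only [measureReal_def, Measure.add_apply, Measure.smul_apply, smul_eq_mul]
  rw [ENNReal.toReal_add (by finiteness) (by finiteness), ENNReal.toReal_mul, ENNReal.toReal_mul,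
    ENNReal.toReal_ofReal ha, ENNReal.toReal_ofReal hb]

variable {pP pN : Measure X} [IsFiniteMeasure pP] [IsFiniteMeasure pN] {π : ℝ}

instance isFiniteMeasure_mix : IsFiniteMeasure (mix pP pN π) :=
  ⟨by simp only [mix, Measure.add_apply, Measure.smul_apply, smul_eq_mul]; finiteness⟩

lemma rankRisk_mix_left (ν : Measure X) [IsFiniteMeasure ν] (hπ : π ∈ Icc (0 : ℝ) 1) :
    rankRisk (mix pP pN π) ν f = π * rankRisk pP ν f + (1 - π) * rankRisk pN ν f := by
  simp only [rankRisk_eq_measureReal, mix_prod,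
    measureReal_ofReal_smul_add_ofReal_smul hπ.1 (sub_nonneg.2 hπ.2)]

lemma rankRisk_mix_right (μ : Measure X) [IsFiniteMeasure μ] (hπ : π ∈ Icc (0 : ℝ) 1) :
    rankRisk μ (mix pP pN π) f = π * rankRisk μ pP f + (1 - π) * rankRisk μ pN f := by
  simp only [rankRisk_eq_measureReal, prod_mix,
    measureReal_ofReal_smul_add_ofReal_smul hπ.1 (sub_nonneg.2 hπ.2)]

lemma rankRisk_add_rankRisk_swap {μ ν : Measure X} [IsFiniteMeasure μ] [IsFiniteMeasure ν]
    (hf : Measurable f) (hties : (μ.prod ν) {p : X × X | f p.1 = f p.2} = 0) :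
    rankRisk μ ν f + rankRisk ν μ f = (μ.prod ν).real univ := by
  have hlt : MeasurableSet {p : X × X | f p.1 < f p.2} :=
    measurableSet_lt (hf.comp measurable_fst) (hf.comp measurable_snd)
  have hgt : MeasurableSet {p : X × X | f p.2 < f p.1} :=
    measurableSet_lt (hf.comp measurable_snd) (hf.comp measurable_fst)
  have heq : MeasurableSet {p : X × X | f p.1 = f p.2} :=
    measurableSet_eq_fun (hf.comp measurable_fst) (hf.comp measurable_snd)
  have hswap : rankRisk ν μ f = (μ.prod ν).real {p : X × X | f p.2 < f p.1} :=
    ((Measure.measurePreserving_swap).measureReal_preimage hlt.nullMeasurableSet).symm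
  have hcover : {p : X × X | f p.1 < f p.2} ∪ {p : X × X | f p.2 < f p.1} =
      {p : X × X | f p.1 = f p.2}ᶜ := by
    ext p
    simp [lt_or_lt_iff_ne]
  have hdisj : Disjoint {p : X × X | f p.1 < f p.2} {p : X × X | f p.2 < f p.1} :=
    disjoint_left.2 fun p (h₁ : f p.1 < f p.2) h₂ => lt_asymm h₁ h₂
  rw [hswap, rankRisk_eq_measureReal, ← measureReal_union hdisj hgt, hcover,
    measureReal_compl heq, measureReal_def _ {p : X × X | f p.1 = f p.2}, hties,
    ENNReal.toReal_zero, sub_zero]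

end

/-- for tie-free `f`, the U² AUC risk is an affine function of the
PN-AUC risk: `R_ij(f) = (π_i − π_j)·R_PN(f) + C_ij`. -/
theorem u2_risk_affine_in_pn_risk {X : Type*} [MeasurableSpace X]
    (pP pN : Measure X) [IsProbabilityMeasure pP] [IsProbabilityMeasure pN]
    (f : X → ℝ) (hf : Measurable f) (htf : TieFree pP pN f)
    (πi πj : ℝ) (hπi : πi ∈ Set.Icc (0 : ℝ) 1) (hπj : πj ∈ Set.Icc (0 : ℝ) 1) :
    rankRisk (mix pP pN πi) (mix pP pN πj) f =
      (πi - πj) * rankRisk pP pN f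
      + ((πi * πj + (1 - πi) * (1 - πj)) / 2 + (1 - πi) * πj) := by
  have hPP := rankRisk_add_rankRisk_swap hf (htf pP (by simp) pP (by simp))
  have hNN := rankRisk_add_rankRisk_swap hf (htf pN (by simp) pN (by simp))
  have hPN := rankRisk_add_rankRisk_swap hf (htf pP (by simp) pN (by simp))
  simp only [probReal_univ] at hPP hNN hPN
  rw [rankRisk_mix_left _ hπi, rankRisk_mix_right _ hπj, rankRisk_mix_right _ hπj]
  linear_combination (πi * πj / 2) * hPP + ((1 - πi) * (1 - πj) / 2) * hNN
    + ((1 - πi) * πj) * hPN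
end

section
/- (U² AUC consistency) Let π_i, π_j ∈ [0,1] with π_i > π_j, and let F be a set of measurable tie-free score functions X → ℝ. If f* ∈ F minimizes the U² AUC risk R_ij over F (i.e. R_ij(f*) ≤ R_ij(f) for all f ∈ F), then f* also minimizes the PN-AUC risk R_PN over F (i.e. R_PN(f*) ≤ R_PN(f) for all f ∈ F). -/
open MeasureTheory ENNReal

section Aux

variable {X : Type*} [MeasurableSpace X]

/-- Swap identity for the ranking set. -/
lemma swap_rank (μ ν : Measure X) [SFinite μ] [SFinite ν] (f : X → ℝ) (hf : Measurable f) :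
    (ν.prod μ) {p : X × X | f p.1 < f p.2} = (μ.prod ν) {p : X × X | f p.2 < f p.1} := by
  have hs : MeasurableSet {p : X × X | f p.1 < f p.2} :=
    measurableSet_lt (hf.comp measurable_fst) (hf.comp measurable_snd)
  have h := (Measure.measurePreserving_swap (μ := μ) (ν := ν)).measure_preimage hs.nullMeasurableSet
  simpa [Set.preimage, Prod.swap] using h.symm

/-- Total mass identity when ties are null. -/
lemma total_rank (μ ν : Measure X) [IsProbabilityMeasure μ] [IsProbabilityMeasure ν]
    (f : X → ℝ) (hf : Measurable f)
    (htie : (μ.prod ν) {p : X × X | f p.1 = f p.2} = 0) :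
    (μ.prod ν) {p : X × X | f p.1 < f p.2} + (μ.prod ν) {p : X × X | f p.2 < f p.1} = 1 := by
  have hs1 : MeasurableSet {p : X × X | f p.1 < f p.2} :=
    measurableSet_lt (hf.comp measurable_fst) (hf.comp measurable_snd)
  have hs2 : MeasurableSet {p : X × X | f p.2 < f p.1} :=
    measurableSet_lt (hf.comp measurable_snd) (hf.comp measurable_fst)
  have hdisj : Disjoint {p : X × X | f p.1 < f p.2} {p : X × X | f p.2 < f p.1} := by
    rw [Set.disjoint_left]
    intro p h1 h2
    simp only [Set.mem_setOf_eq] at h1 h2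
    exact lt_asymm h1 h2
  have hunion : (μ.prod ν) ({p : X × X | f p.1 < f p.2} ∪ {p : X × X | f p.2 < f p.1}) =
      (μ.prod ν) {p : X × X | f p.1 < f p.2} + (μ.prod ν) {p : X × X | f p.2 < f p.1} :=
    measure_union hdisj hs2
  have hcover : ({p : X × X | f p.1 < f p.2} ∪ {p : X × X | f p.2 < f p.1}) ∪
      {p : X × X | f p.1 = f p.2} = Set.univ := by
    ext p
    simp only [Set.mem_union, Set.mem_setOf_eq, Set.mem_univ, iff_true]
    rcases lt_trichotomy (f p.1) (f p.2) with h | h | h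
    · exact Or.inl (Or.inl h)
    · exact Or.inr h
    · exact Or.inl (Or.inr h)
  have h1 : (μ.prod ν) Set.univ = 1 := measure_univ
  have hle : (1 : ℝ≥0∞) ≤ (μ.prod ν) {p : X × X | f p.1 < f p.2} +
      (μ.prod ν) {p : X × X | f p.2 < f p.1} := by
    calc (1 : ℝ≥0∞) = (μ.prod ν) Set.univ := h1.symm
    _ = (μ.prod ν) (({p : X × X | f p.1 < f p.2} ∪ {p : X × X | f p.2 < f p.1}) ∪
        {p : X × X | f p.1 = f p.2}) := by rw [hcover]
    _ ≤ (μ.prod ν) ({p : X × X | f p.1 < f p.2} ∪ {p : X × X | f p.2 < f p.1}) +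
        (μ.prod ν) {p : X × X | f p.1 = f p.2} := measure_union_le _ _
    _ = (μ.prod ν) {p : X × X | f p.1 < f p.2} + (μ.prod ν) {p : X × X | f p.2 < f p.1} := by
        rw [htie, add_zero, hunion]
  have hge : (μ.prod ν) {p : X × X | f p.1 < f p.2} +
      (μ.prod ν) {p : X × X | f p.2 < f p.1} ≤ 1 := by
    rw [← hunion, ← h1]
    exact measure_mono (Set.subset_univ _)
  exact le_antisymm hge hle

/-- For identically distributed classes, the ranking probability is 1/2. -/
lemma half_rank (μ : Measure X) [IsProbabilityMeasure μ] (f : X → ℝ) (hf : Measurable f)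
    (htie : (μ.prod μ) {p : X × X | f p.1 = f p.2} = 0) :
    (μ.prod μ) {p : X × X | f p.1 < f p.2} = 1/2 := by
  have hswap := swap_rank μ μ f hf
  have htot := total_rank μ μ f hf htie
  rw [← hswap] at htot
  have h2 : (2 : ℝ≥0∞) * (μ.prod μ) {p : X × X | f p.1 < f p.2} = 1 := by
    rw [two_mul]; exact htot
  exact (ENNReal.eq_div_iff (by norm_num) (by norm_num)).mpr h2


/-- Product of scaled measures applied to a measurable set. -/
lemma smul_prod_apply (c d : ℝ≥0∞) (hd : d ≠ ⊤) (μ ν : Measure X) [SFinite μ] [SFinite ν]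
    {t : Set (X × X)} (ht : MeasurableSet t) :
    ((c • μ).prod (d • ν)) t = c * d * (μ.prod ν) t := by
  rw [Measure.prod_apply ht, Measure.prod_apply ht, lintegral_smul_measure]
  simp only [Measure.smul_apply, smul_eq_mul]
  rw [lintegral_const_mul' _ _ hd]
  ring

/-- Key decomposition: the U² risk is an affine function of the PN risk. -/
lemma key_decomp (pP pN : Measure X) [IsProbabilityMeasure pP] [IsProbabilityMeasure pN]
    (πi πj : ℝ) (hπi : πi ∈ Set.Icc (0 : ℝ) 1) (hπj : πj ∈ Set.Icc (0 : ℝ) 1)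
    (f : X → ℝ) (hf : Measurable f) (htf : TieFree pP pN f) :
    rankRisk (mix pP pN πi) (mix pP pN πj) f =
      (πi * πj / 2 + (1 - πi) * (1 - πj) / 2 + (1 - πi) * πj) +
        (πi - πj) * rankRisk pP pN f := by
  obtain ⟨hi0, hi1⟩ := hπi
  obtain ⟨hj0, hj1⟩ := hπj
  have hji : (0:ℝ) ≤ 1 - πj := by linarith
  have hii : (0:ℝ) ≤ 1 - πi := by linarith
  have hPmem : pP ∈ ({pP, pN} : Set (Measure X)) := Set.mem_insert _ _
  have hNmem : pN ∈ ({pP, pN} : Set (Measure X)) := Set.mem_insert_of_mem _ rfl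
  set s := {p : X × X | f p.1 < f p.2} with hs_def
  have hsm : MeasurableSet s :=
    measurableSet_lt (hf.comp measurable_fst) (hf.comp measurable_snd)
  have hPP : (pP.prod pP) s = 1/2 := half_rank pP f hf (htf pP hPmem pP hPmem)
  have hNN : (pN.prod pN) s = 1/2 := half_rank pN f hf (htf pN hNmem pN hNmem)
  have hswap : (pN.prod pP) s = (pP.prod pN) {p : X × X | f p.2 < f p.1} :=
    swap_rank pP pN f hf
  have htot : (pP.prod pN) s + (pP.prod pN) {p : X × X | f p.2 < f p.1} = 1 :=
    total_rank pP pN f hf (htf pP hPmem pN hNmem)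
  have hexp : ((mix pP pN πi).prod (mix pP pN πj)) s =
      ENNReal.ofReal πi * ENNReal.ofReal πj * (pP.prod pP) s +
      (ENNReal.ofReal πi * ENNReal.ofReal (1 - πj) * (pP.prod pN) s +
      (ENNReal.ofReal (1 - πi) * ENNReal.ofReal πj * (pN.prod pP) s +
      ENNReal.ofReal (1 - πi) * ENNReal.ofReal (1 - πj) * (pN.prod pN) s)) := by
    simp only [mix, Measure.prod_add, Measure.add_prod, Measure.add_apply]
    rw [smul_prod_apply _ _ ENNReal.ofReal_ne_top pP pP hsm,
      smul_prod_apply _ _ ENNReal.ofReal_ne_top pP pN hsm,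
      smul_prod_apply _ _ ENNReal.ofReal_ne_top pN pP hsm,
      smul_prod_apply _ _ ENNReal.ofReal_ne_top pN pN hsm]
    ring
  rw [hPP, hNN, hswap] at hexp
  have term_toReal : ∀ (a b : ℝ), 0 ≤ a → 0 ≤ b → ∀ (m : ℝ≥0∞), m ≠ ⊤ →
      (ENNReal.ofReal a * ENNReal.ofReal b * m).toReal = a * b * m.toReal := by
    intro a b ha hb m _
    rw [ENNReal.toReal_mul, ENNReal.toReal_mul, ENNReal.toReal_ofReal ha,
      ENNReal.toReal_ofReal hb]
  have term_fin : ∀ (a b : ℝ) (m : ℝ≥0∞), m ≠ ⊤ →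
      ENNReal.ofReal a * ENNReal.ofReal b * m ≠ ⊤ := by
    intro a b m hm
    exact ENNReal.mul_ne_top (ENNReal.mul_ne_top ENNReal.ofReal_ne_top ENNReal.ofReal_ne_top) hm
  have hhalf_fin : ((1:ℝ≥0∞)/2) ≠ ⊤ := by norm_num
  have hPNfin : (pP.prod pN) s ≠ ⊤ := measure_ne_top _ _
  have hQfin : (pP.prod pN) {p : X × X | f p.2 < f p.1} ≠ ⊤ := measure_ne_top _ _
  set r := ((pP.prod pN) s).toReal with hr_def
  set q := ((pP.prod pN) {p : X × X | f p.2 < f p.1}).toReal with hq_def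
  have hrq : r + q = 1 := by
    rw [hr_def, hq_def, ← ENNReal.toReal_add hPNfin hQfin, htot]
    simp
  have hhalf : ((1 : ℝ≥0∞)/2).toReal = 1/2 := by simp
  have key : rankRisk (mix pP pN πi) (mix pP pN πj) f =
      πi * πj * (1/2) + (πi * (1 - πj) * r + ((1 - πi) * πj * q
        + (1 - πi) * (1 - πj) * (1/2))) := by
    rw [rankRisk, hexp]
    rw [ENNReal.toReal_add (term_fin _ _ _ hhalf_fin)
        (ENNReal.add_ne_top.mpr ⟨term_fin _ _ _ hPNfin,
          ENNReal.add_ne_top.mpr ⟨term_fin _ _ _ hQfin, term_fin _ _ _ hhalf_fin⟩⟩),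
      ENNReal.toReal_add (term_fin _ _ _ hPNfin)
        (ENNReal.add_ne_top.mpr ⟨term_fin _ _ _ hQfin, term_fin _ _ _ hhalf_fin⟩),
      ENNReal.toReal_add (term_fin _ _ _ hQfin) (term_fin _ _ _ hhalf_fin),
      term_toReal _ _ hi0 hj0 _ hhalf_fin, term_toReal _ _ hi0 hji _ hPNfin,
      term_toReal _ _ hii hj0 _ hQfin, term_toReal _ _ hii hji _ hhalf_fin, hhalf]
  rw [key, rankRisk, ← hs_def, ← hr_def]
  have hq1 : q = 1 - r := by linarith
  rw [hq1]; ring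

end Aux

/-- U² AUC consistency: a minimizer of the U² AUC risk `R_ij` over a
family of measurable tie-free score functions also minimizes the PN-AUC risk. -/
theorem u2_auc_consistency {X : Type*} [MeasurableSpace X]
    (pP pN : Measure X) [IsProbabilityMeasure pP] [IsProbabilityMeasure pN]
    (πi πj : ℝ) (hπi : πi ∈ Set.Icc (0 : ℝ) 1) (hπj : πj ∈ Set.Icc (0 : ℝ) 1)
    (hij : πj < πi)
    (F : Set (X → ℝ))
    (hF : ∀ f ∈ F, Measurable f ∧ TieFree pP pN f)
    (fstar : X → ℝ) (hfstar : fstar ∈ F)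
    (hmin : ∀ f ∈ F,
      rankRisk (mix pP pN πi) (mix pP pN πj) fstar ≤
        rankRisk (mix pP pN πi) (mix pP pN πj) f) :
    ∀ f ∈ F, rankRisk pP pN fstar ≤ rankRisk pP pN f := by
  intro f hfF
  obtain ⟨hmf, htf⟩ := hF f hfF
  obtain ⟨hms, hts⟩ := hF fstar hfstar
  have h1 := key_decomp pP pN πi πj hπi hπj fstar hms hts
  have h2 := key_decomp pP pN πi πj hπi hπj f hmf htf
  have hle := hmin f hfF
  rw [h1, h2] at hle
  have hd : 0 < πi - πj := sub_pos.mpr hij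
  nlinarith [hle, hd]
end

section
/- If π_i = π_j, then the U² AUC risk is constant over tie-free functions: R_ij(f) = C_ij = (π_i·π_j + (1−π_i)·(1−π_j))/2 + (1−π_i)·π_j for every measurable tie-free f : X → ℝ; in particular R_ij carries no information about the ranking quality of f. -/
open MeasureTheory

/-!
With equal priors both arguments of the risk are the same mixture `μ`, and `(x, x') ↦ (x', x)`
preserves `μ ⊗ μ`, so `f x < f x'` and `f x' < f x` have the same probability. Ties are null
under `μ ⊗ μ` because `μ ≪ p_P + p_N` and `f` is tie-free, hence both events have probability
`1/2`. The constant `C_ij` equals `1/2` when `π_i = π_j`.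
-/

section Mixture

variable {X : Type*} [MeasurableSpace X]

lemma mix_isProbabilityMeasure (pP pN : Measure X) [IsProbabilityMeasure pP]
    [IsProbabilityMeasure pN] {π : ℝ} (hπ : π ∈ Set.Icc (0 : ℝ) 1) :
    IsProbabilityMeasure (mix pP pN π) := by
  constructor
  simp only [mix, Measure.add_apply, Measure.smul_apply, measure_univ, smul_eq_mul, mul_one]
  rw [← ENNReal.ofReal_add hπ.1 (by linarith [hπ.2])]
  norm_num

lemma mix_absolutelyContinuous (pP pN : Measure X) (π : ℝ) : mix pP pN π ≪ pP + pN :=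
  Measure.smul_absolutelyContinuous.add Measure.smul_absolutelyContinuous

lemma TieFree.prod_mix_ties_eq_zero {pP pN : Measure X} [SFinite pP] [SFinite pN]
    {f : X → ℝ} (hf : TieFree pP pN f) (π π' : ℝ) :
    ((mix pP pN π).prod (mix pP pN π')) {p : X × X | f p.1 = f p.2} = 0 := by
  apply (mix_absolutelyContinuous pP pN π).prod (mix_absolutelyContinuous pP pN π')
  simp only [Measure.add_prod, Measure.prod_add, Measure.add_apply]
  simp [hf pP (by simp) pP (by simp), hf pP (by simp) pN (by simp),
    hf pN (by simp) pP (by simp), hf pN (by simp) pN (by simp)]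

end Mixture

section SelfProduct

variable {X : Type*} [MeasurableSpace X] {μ : Measure X} {f : X → ℝ}

lemma prod_self_setOf_gt_eq_setOf_lt [SFinite μ] (hf : Measurable f) :
    (μ.prod μ) {p : X × X | f p.2 < f p.1} = (μ.prod μ) {p : X × X | f p.1 < f p.2} :=
  Measure.measurePreserving_swap.measure_preimage
    (measurableSet_lt (hf.comp measurable_fst) (hf.comp measurable_snd)).nullMeasurableSet

lemma prod_self_setOf_lt_eq_half [IsProbabilityMeasure μ] (hf : Measurable f)
    (hties : (μ.prod μ) {p : X × X | f p.1 = f p.2} = 0) :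
    (μ.prod μ) {p : X × X | f p.1 < f p.2} = 1 / 2 := by
  set A := {p : X × X | f p.1 < f p.2}
  set B := {p : X × X | f p.2 < f p.1}
  set E := {p : X × X | f p.1 = f p.2}
  have hf₁ : Measurable fun p : X × X ↦ f p.1 := hf.comp measurable_fst
  have hf₂ : Measurable fun p : X × X ↦ f p.2 := hf.comp measurable_snd
  have hA : MeasurableSet A := measurableSet_lt hf₁ hf₂
  have hE : MeasurableSet E := measurableSet_eq_fun hf₁ hf₂
  have hBE : Disjoint B E := Set.disjoint_left.2 fun p hB hE ↦ hB.ne' hE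
  have hcompl : Aᶜ = B ∪ E := by
    ext p
    simp only [A, B, E, Set.mem_compl_iff, Set.mem_ofPred_eq, Set.mem_union, not_lt,
      le_iff_lt_or_eq, eq_comm]
  have hsum : (μ.prod μ) A + (μ.prod μ) A = 1 := calc
    _ = (μ.prod μ) A + (μ.prod μ) (B ∪ E) := by
      rw [measure_union hBE hE, hties, add_zero, prod_self_setOf_gt_eq_setOf_lt hf]
    _ = 1 := by rw [← hcompl, measure_add_measure_compl hA, measure_univ]
  rw [ENNReal.eq_div_iff two_ne_zero ENNReal.ofNat_ne_top, two_mul, hsum]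

end SelfProduct

theorem u2_risk_constant_of_equal_priors_general {X : Type*} [MeasurableSpace X]
    (pP pN : Measure X) [IsProbabilityMeasure pP] [IsProbabilityMeasure pN]
    (πi πj : ℝ) (hπi : πi ∈ Set.Icc (0 : ℝ) 1)
    (heq : πi = πj) :
    ∀ f : X → ℝ, Measurable f → TieFree pP pN f →
      rankRisk (mix pP pN πi) (mix pP pN πj) f =
        (πi * πj + (1 - πi) * (1 - πj)) / 2 + (1 - πi) * πj := by
  subst heq
  intro f hf htf
  have := mix_isProbabilityMeasure pP pN hπi
  have hhalf := prod_self_setOf_lt_eq_half hf (htf.prod_mix_ties_eq_zero πi πi)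
  rw [rankRisk, hhalf, ENNReal.toReal_div]
  norm_num
  ring

/-- when the two class priors coincide, the U² AUC risk is the constant
`C_ij` for every measurable tie-free score function. -/
theorem u2_risk_constant_of_equal_priors {X : Type*} [MeasurableSpace X]
    (pP pN : Measure X) [IsProbabilityMeasure pP] [IsProbabilityMeasure pN]
    (πi πj : ℝ) (hπi : πi ∈ Set.Icc (0 : ℝ) 1) (hπj : πj ∈ Set.Icc (0 : ℝ) 1)
    (heq : πi = πj) :
    ∀ f : X → ℝ, Measurable f → TieFree pP pN f →
      rankRisk (mix pP pN πi) (mix pP pN πj) f =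
        (πi * πj + (1 - πi) * (1 - πj)) / 2 + (1 - πi) * πj :=
  u2_risk_constant_of_equal_priors_general pP pN πi πj hπi heq
end

section
/- (U^m AUC consistency) Let π_1 ≥ π_2 ≥ … ≥ π_m be priors in [0,1] with π_1 > π_m, let z_ij > 0 for all 1 ≤ i < j ≤ m, and let F be a set of measurable tie-free score functions X → ℝ. If f* ∈ F minimizes the U^m AUC risk R_{U^m}(f) = Σ_{1≤i<j≤m} z_ij·R_ij(f) over F, then f* also minimizes the PN-AUC risk R_PN over F. -/
open MeasureTheory

section Aux
variable {X : Type*} [MeasurableSpace X]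

lemma smul_prod' (c : ENNReal) (hc : c ≠ ⊤) (μ ν : Measure X)
    [IsFiniteMeasure μ] [IsFiniteMeasure ν] : (c • μ).prod ν = c • (μ.prod ν) := by
  haveI : IsFiniteMeasure (c • μ) := by
    refine ⟨?_⟩
    simp only [Measure.smul_apply, smul_eq_mul]
    exact ENNReal.mul_lt_top hc.lt_top (measure_lt_top μ _)
  refine Measure.prod_eq fun s t hs ht => ?_
  simp [Measure.prod_prod, mul_assoc]

lemma prod_smul' (c : ENNReal) (hc : c ≠ ⊤) (μ ν : Measure X)
    [IsFiniteMeasure μ] [IsFiniteMeasure ν] : μ.prod (c • ν) = c • (μ.prod ν) := by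
  haveI : IsFiniteMeasure (c • ν) := by
    refine ⟨?_⟩
    simp only [Measure.smul_apply, smul_eq_mul]
    exact ENNReal.mul_lt_top hc.lt_top (measure_lt_top ν _)
  refine Measure.prod_eq fun s t hs ht => ?_
  simp [Measure.prod_prod]
  ring

end Aux

section Aux2
variable {X : Type*} [MeasurableSpace X]
variable (pP pN : Measure X) [IsProbabilityMeasure pP] [IsProbabilityMeasure pN]

lemma mix_rank {a b : ℝ} (ha : a ∈ Set.Icc (0:ℝ) 1) (hb : b ∈ Set.Icc (0:ℝ) 1) (f : X → ℝ) :
    rankRisk (mix pP pN a) (mix pP pN b) f =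
      a*b*rankRisk pP pP f + a*(1-b)*rankRisk pP pN f
      + (1-a)*b*rankRisk pN pP f + (1-a)*(1-b)*rankRisk pN pN f := by
  have ha1 : (0:ℝ) ≤ 1 - a := by linarith [ha.2]
  have hb1 : (0:ℝ) ≤ 1 - b := by linarith [hb.2]
  unfold rankRisk mix
  set S := {p : X × X | f p.1 < f p.2} with hS
  haveI hfin : ∀ c : ℝ, IsFiniteMeasure (ENNReal.ofReal c • pP + ENNReal.ofReal (1-c) • pN) := by
    intro c
    refine ⟨?_⟩
    simp only [Measure.add_apply, Measure.smul_apply, smul_eq_mul]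
    exact ENNReal.add_lt_top.mpr ⟨ENNReal.mul_lt_top ENNReal.ofReal_lt_top (measure_lt_top _ _),
      ENNReal.mul_lt_top ENNReal.ofReal_lt_top (measure_lt_top _ _)⟩
  haveI := hfin b
  haveI := hfin a
  have hE : ((ENNReal.ofReal a • pP + ENNReal.ofReal (1-a) • pN).prod
      (ENNReal.ofReal b • pP + ENNReal.ofReal (1-b) • pN)) S =
      ENNReal.ofReal a * ENNReal.ofReal b * (pP.prod pP) S
      + ENNReal.ofReal a * ENNReal.ofReal (1-b) * (pP.prod pN) S
      + ENNReal.ofReal (1-a) * ENNReal.ofReal b * (pN.prod pP) S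
      + ENNReal.ofReal (1-a) * ENNReal.ofReal (1-b) * (pN.prod pN) S := by
    rw [Measure.add_prod, smul_prod' _ ENNReal.ofReal_ne_top, smul_prod' _ ENNReal.ofReal_ne_top,
      Measure.prod_add, Measure.prod_add,
      prod_smul' _ ENNReal.ofReal_ne_top, prod_smul' _ ENNReal.ofReal_ne_top,
      prod_smul' _ ENNReal.ofReal_ne_top, prod_smul' _ ENNReal.ofReal_ne_top]
    simp only [Measure.smul_apply, Measure.add_apply, smul_eq_mul]
    ring
  rw [hE, ENNReal.toReal_add (by finiteness) (by finiteness),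
    ENNReal.toReal_add (by finiteness) (by finiteness),
    ENNReal.toReal_add (by finiteness) (by finiteness)]
  simp only [ENNReal.toReal_mul, ENNReal.toReal_ofReal ha.1, ENNReal.toReal_ofReal hb.1,
    ENNReal.toReal_ofReal ha1, ENNReal.toReal_ofReal hb1]

end Aux2

section Aux3
variable {X : Type*} [MeasurableSpace X]

lemma rank_swap' (f : X → ℝ) (hf : Measurable f) (μ ν : Measure X) [SFinite μ] [SFinite ν] :
    (ν.prod μ) {p : X × X | f p.1 < f p.2} = (μ.prod ν) {p : X × X | f p.2 < f p.1} := by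
  have h1 : MeasurableSet {p : X × X | f p.1 < f p.2} := by
    exact measurableSet_lt (hf.comp measurable_fst) (hf.comp measurable_snd)
  rw [← Measure.prod_swap, Measure.map_apply measurable_swap h1]
  rfl

lemma rank_split (f : X → ℝ) (hf : Measurable f) (μ ν : Measure X)
    [IsProbabilityMeasure μ] [IsProbabilityMeasure ν] :
    (μ.prod ν) {p : X × X | f p.1 < f p.2} + (μ.prod ν) {p : X × X | f p.2 < f p.1}
      + (μ.prod ν) {p : X × X | f p.1 = f p.2} = 1 := by
  have h1 : MeasurableSet {p : X × X | f p.1 < f p.2} :=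
    by exact measurableSet_lt (hf.comp measurable_fst) (hf.comp measurable_snd)
  have h2 : MeasurableSet {p : X × X | f p.2 < f p.1} :=
    by exact measurableSet_lt (hf.comp measurable_snd) (hf.comp measurable_fst)
  have h3 : MeasurableSet {p : X × X | f p.1 = f p.2} :=
    by exact measurableSet_eq_fun (hf.comp measurable_fst) (hf.comp measurable_snd)
  have hd12 : Disjoint {p : X × X | f p.1 < f p.2} {p : X × X | f p.2 < f p.1} := by
    rw [Set.disjoint_left]; intro p hp hp'
    simp only [Set.mem_setOf_eq] at hp hp'
    exact lt_asymm hp hp'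
  have hd3 : Disjoint ({p : X × X | f p.1 < f p.2} ∪ {p : X × X | f p.2 < f p.1})
      {p : X × X | f p.1 = f p.2} := by
    rw [Set.disjoint_left]; intro p hp hp'
    rcases hp with hp | hp
    · exact absurd hp' (ne_of_lt hp)
    · exact absurd hp'.symm (ne_of_lt hp)
  have hu : ({p : X × X | f p.1 < f p.2} ∪ {p : X × X | f p.2 < f p.1})
      ∪ {p : X × X | f p.1 = f p.2} = Set.univ := by
    ext p; simp only [Set.mem_union, Set.mem_setOf_eq, Set.mem_univ, iff_true]
    rcases lt_trichotomy (f p.1) (f p.2) with h | h | h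
    · exact Or.inl (Or.inl h)
    · exact Or.inr h
    · exact Or.inl (Or.inr h)
  have := measure_union (μ := μ.prod ν) hd3 h3
  rw [hu, measure_union hd12 h2] at this
  rw [← this, measure_univ]

lemma rank_self (f : X → ℝ) (hf : Measurable f) (μ : Measure X) [IsProbabilityMeasure μ]
    (htie : (μ.prod μ) {p : X × X | f p.1 = f p.2} = 0) :
    rankRisk μ μ f = 1/2 := by
  have hsw := rank_swap' f hf μ μ
  have hs := rank_split f hf μ μ
  rw [htie, add_zero, ← hsw] at hs
  have hne : (μ.prod μ) {p : X × X | f p.1 < f p.2} ≠ ⊤ := measure_ne_top _ _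
  unfold rankRisk
  have := congrArg ENNReal.toReal hs
  rw [ENNReal.toReal_add hne hne, ENNReal.toReal_one] at this
  linarith

lemma rank_compl (f : X → ℝ) (hf : Measurable f) (μ ν : Measure X)
    [IsProbabilityMeasure μ] [IsProbabilityMeasure ν]
    (htie : (μ.prod ν) {p : X × X | f p.1 = f p.2} = 0) :
    rankRisk ν μ f = 1 - rankRisk μ ν f := by
  have hsw := rank_swap' f hf μ ν
  have hs := rank_split f hf μ ν
  rw [htie, add_zero] at hs
  unfold rankRisk
  rw [hsw]
  have := congrArg ENNReal.toReal hs
  rw [ENNReal.toReal_add (measure_ne_top _ _) (measure_ne_top _ _), ENNReal.toReal_one] at this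
  linarith

end Aux3

/-- U^m AUC consistency: with weakly decreasing priors in `[0,1]`,
`π_1 > π_m`, and positive weights `z_ij`, a minimizer of the U^m AUC risk
`Σ_{i<j} z_ij·R_ij` over a family of measurable tie-free score functions also
minimizes the PN-AUC risk `R_PN`. -/
theorem um_auc_consistency {X : Type*} [MeasurableSpace X]
    (pP pN : Measure X) [IsProbabilityMeasure pP] [IsProbabilityMeasure pN]
    (m : ℕ) (hm : 0 < m) (π : Fin m → ℝ) (hπ : ∀ i, π i ∈ Set.Icc (0 : ℝ) 1)
    (hdec : Antitone π)
    (hgap : π ⟨m - 1, Nat.sub_lt hm one_pos⟩ < π ⟨0, hm⟩)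
    (z : Fin m → Fin m → ℝ) (hz : ∀ i j, i < j → 0 < z i j)
    (F : Set (X → ℝ))
    (hF : ∀ f ∈ F, Measurable f ∧ TieFree pP pN f)
    (fstar : X → ℝ) (hfstar : fstar ∈ F)
    (hmin : ∀ f ∈ F,
      (∑ i : Fin m, ∑ j ∈ Finset.Ioi i,
          z i j * rankRisk (mix pP pN (π i)) (mix pP pN (π j)) fstar) ≤
        ∑ i : Fin m, ∑ j ∈ Finset.Ioi i,
          z i j * rankRisk (mix pP pN (π i)) (mix pP pN (π j)) f) :
    ∀ f ∈ F, rankRisk pP pN fstar ≤ rankRisk pP pN f := by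
  have hPPmem : pP ∈ ({pP, pN} : Set (Measure X)) := Set.mem_insert _ _
  have hPNmem : pN ∈ ({pP, pN} : Set (Measure X)) := Set.mem_insert_iff.mpr (Or.inr rfl)
  have key : ∀ (a b : ℝ), a ∈ Set.Icc (0:ℝ) 1 → b ∈ Set.Icc (0:ℝ) 1 →
      ∀ g : X → ℝ, Measurable g → TieFree pP pN g →
      rankRisk (mix pP pN a) (mix pP pN b) g
        = ((a*b + (1-a)*(1-b))/2 + (1-a)*b) + (a - b) * rankRisk pP pN g := by
    intro a b ha hb g hgm hgt
    rw [mix_rank pP pN ha hb g, rank_self g hgm pP (hgt pP hPPmem pP hPPmem),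
      rank_self g hgm pN (hgt pN hPNmem pN hPNmem),
      rank_compl g hgm pP pN (hgt pP hPPmem pN hPNmem)]
    ring
  intro f hf
  obtain ⟨hfm, hft⟩ := hF f hf
  obtain ⟨hsm, hst⟩ := hF fstar hfstar
  have hsumeq : ∀ g : X → ℝ, Measurable g → TieFree pP pN g →
      (∑ i : Fin m, ∑ j ∈ Finset.Ioi i,
          z i j * rankRisk (mix pP pN (π i)) (mix pP pN (π j)) g)
      = (∑ i : Fin m, ∑ j ∈ Finset.Ioi i,
            z i j * ((π i*π j + (1-π i)*(1-π j))/2 + (1-π i)*π j))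
        + (∑ i : Fin m, ∑ j ∈ Finset.Ioi i, z i j * (π i - π j)) * rankRisk pP pN g := by
    intro g hgm hgt
    rw [Finset.sum_mul, ← Finset.sum_add_distrib]
    refine Finset.sum_congr rfl fun i _ => ?_
    rw [Finset.sum_mul, ← Finset.sum_add_distrib]
    refine Finset.sum_congr rfl fun j _ => ?_
    rw [key (π i) (π j) (hπ i) (hπ j) g hgm hgt]
    ring
  have hm2 : 0 < m - 1 := by
    by_contra h
    push_neg at h
    have heq : (⟨m - 1, Nat.sub_lt hm one_pos⟩ : Fin m) = ⟨0, hm⟩ := Fin.ext (by omega)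
    rw [heq] at hgap
    exact lt_irrefl _ hgap
  have hK : 0 < ∑ i : Fin m, ∑ j ∈ Finset.Ioi i, z i j * (π i - π j) := by
    have hnn : ∀ i : Fin m, ∀ j ∈ Finset.Ioi i, 0 ≤ z i j * (π i - π j) := fun i j hj =>
      mul_nonneg (hz i j (Finset.mem_Ioi.mp hj)).le
        (sub_nonneg.mpr (hdec (Finset.mem_Ioi.mp hj).le))
    refine Finset.sum_pos' (fun i _ => Finset.sum_nonneg (hnn i)) ⟨⟨0, hm⟩, Finset.mem_univ _, ?_⟩
    have hlt : (⟨0, hm⟩ : Fin m) < ⟨m - 1, Nat.sub_lt hm one_pos⟩ := Fin.mk_lt_mk.mpr hm2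
    exact Finset.sum_pos' (hnn _) ⟨⟨m - 1, Nat.sub_lt hm one_pos⟩, Finset.mem_Ioi.mpr hlt,
      mul_pos (hz _ _ hlt) (sub_pos.mpr hgap)⟩
  have h := hmin f hf
  rw [hsumeq fstar hsm hst, hsumeq f hfm hft] at h
  exact le_of_mul_le_mul_left ((add_le_add_iff_left _).mp h) hK
end

section
/- (Excess risk transfer, two sets) Let π_i, π_j ∈ [0,1] with π_i > π_j. For any two measurable tie-free functions f, g : X → ℝ, the excess PN-AUC risk equals the rescaled excess U² AUC risk: R_PN(f) − R_PN(g) = (R_ij(f) − R_ij(g)) / (π_i − π_j). -/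
open MeasureTheory
open scoped ENNReal

lemma smul_prod_smul {X : Type*} [MeasurableSpace X] (μ ν : Measure X)
    [SFinite μ] [SFinite ν] (c d : ℝ≥0∞) :
    (c • μ).prod (d • ν) = (c * d) • (μ.prod ν) := by
  ext s hs
  simp only [Measure.prod_apply hs, Measure.smul_apply, smul_eq_mul, lintegral_smul_measure]
  rw [lintegral_const_mul _ (measurable_measure_prodMk_left hs), mul_assoc]

lemma risk_add {X : Type*} [MeasurableSpace X] (μ ν : Measure X)
    [IsProbabilityMeasure μ] [IsProbabilityMeasure ν] (f : X → ℝ) (hf : Measurable f)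
    (ht : (μ.prod ν) {p : X × X | f p.1 = f p.2} = 0) :
    rankRisk μ ν f + rankRisk ν μ f = 1 := by
  set S : Set (X × X) := {p | f p.1 < f p.2} with hSdef
  set S' : Set (X × X) := {p | f p.2 < f p.1} with hS'def
  have hS : MeasurableSet S := measurableSet_lt (hf.comp measurable_fst) (hf.comp measurable_snd)
  have hS' : MeasurableSet S' := measurableSet_lt (hf.comp measurable_snd) (hf.comp measurable_fst)
  have hswap : (ν.prod μ) S = (μ.prod ν) S' := by
    rw [← Measure.prod_swap, Measure.map_apply measurable_swap hS]
    rfl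
  have hcompl : (S ∪ S')ᶜ = {p : X × X | f p.1 = f p.2} := by
    ext p
    simp only [Set.mem_compl_iff, Set.mem_union, Set.mem_setOf_eq, not_or, not_lt, hSdef, hS'def]
    constructor
    · rintro ⟨h1, h2⟩; exact le_antisymm h2 h1
    · intro h; exact ⟨le_of_eq h.symm, le_of_eq h⟩
  have huniv : (μ.prod ν) (S ∪ S') = 1 := by
    have h := measure_add_measure_compl (μ := μ.prod ν) (hS.union hS')
    rw [hcompl, ht, add_zero, measure_univ] at h
    exact h
  have hdisj : Disjoint S S' := by
    rw [Set.disjoint_left]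
    rintro p (hp : f p.1 < f p.2) (hp' : f p.2 < f p.1)
    exact lt_asymm hp hp'
  have hsum : (μ.prod ν) S + (μ.prod ν) S' = 1 := by
    rw [← measure_union hdisj hS', huniv]
  unfold rankRisk
  rw [hswap, ← ENNReal.toReal_add (measure_ne_top _ _) (measure_ne_top _ _), hsum]
  simp

lemma risk_self {X : Type*} [MeasurableSpace X] (μ : Measure X)
    [IsProbabilityMeasure μ] (f : X → ℝ) (hf : Measurable f)
    (ht : (μ.prod μ) {p : X × X | f p.1 = f p.2} = 0) :
    rankRisk μ μ f = 1 / 2 := by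
  have := risk_add μ μ f hf ht
  linarith

lemma rank_mix {X : Type*} [MeasurableSpace X]
    (pP pN : Measure X) [IsProbabilityMeasure pP] [IsProbabilityMeasure pN]
    (a b : ℝ) (ha : a ∈ Set.Icc (0:ℝ) 1) (hb : b ∈ Set.Icc (0:ℝ) 1)
    (f : X → ℝ) (hf : Measurable f) (htf : TieFree pP pN f) :
    rankRisk (mix pP pN a) (mix pP pN b) f =
      a * b * (1/2) + a * (1-b) * rankRisk pP pN f
        + (1-a) * b * (1 - rankRisk pP pN f) + (1-a) * (1-b) * (1/2) := by
  have hPP : pP ∈ ({pP, pN} : Set (Measure X)) := Set.mem_insert _ _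
  have hNN : pN ∈ ({pP, pN} : Set (Measure X)) := Set.mem_insert_of_mem _ rfl
  have hexp : (mix pP pN a).prod (mix pP pN b) =
      (ENNReal.ofReal a * ENNReal.ofReal b) • pP.prod pP
      + (ENNReal.ofReal a * ENNReal.ofReal (1-b)) • pP.prod pN
      + (ENNReal.ofReal (1-a) * ENNReal.ofReal b) • pN.prod pP
      + (ENNReal.ofReal (1-a) * ENNReal.ofReal (1-b)) • pN.prod pN := by
    unfold mix
    rw [Measure.add_prod, Measure.prod_add, Measure.prod_add,
      smul_prod_smul, smul_prod_smul, smul_prod_smul, smul_prod_smul]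
    abel
  set S : Set (X × X) := {p | f p.1 < f p.2} with hSdef
  have h1f : ENNReal.ofReal a * ENNReal.ofReal b * (pP.prod pP) S ≠ ⊤ :=
    ENNReal.mul_ne_top (ENNReal.mul_ne_top ENNReal.ofReal_ne_top ENNReal.ofReal_ne_top) (measure_ne_top _ _)
  have h2f : ENNReal.ofReal a * ENNReal.ofReal (1-b) * (pP.prod pN) S ≠ ⊤ :=
    ENNReal.mul_ne_top (ENNReal.mul_ne_top ENNReal.ofReal_ne_top ENNReal.ofReal_ne_top) (measure_ne_top _ _)
  have h3f : ENNReal.ofReal (1-a) * ENNReal.ofReal b * (pN.prod pP) S ≠ ⊤ :=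
    ENNReal.mul_ne_top (ENNReal.mul_ne_top ENNReal.ofReal_ne_top ENNReal.ofReal_ne_top) (measure_ne_top _ _)
  have h4f : ENNReal.ofReal (1-a) * ENNReal.ofReal (1-b) * (pN.prod pN) S ≠ ⊤ :=
    ENNReal.mul_ne_top (ENNReal.mul_ne_top ENNReal.ofReal_ne_top ENNReal.ofReal_ne_top) (measure_ne_top _ _)
  have key : rankRisk (mix pP pN a) (mix pP pN b) f =
      a * b * rankRisk pP pP f + a * (1-b) * rankRisk pP pN f
      + (1-a) * b * rankRisk pN pP f + (1-a) * (1-b) * rankRisk pN pN f := by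
    unfold rankRisk
    rw [hexp]
    simp only [Measure.add_apply, Measure.smul_apply, smul_eq_mul, ← hSdef]
    rw [ENNReal.toReal_add (ENNReal.add_ne_top.2 ⟨ENNReal.add_ne_top.2 ⟨h1f, h2f⟩, h3f⟩) h4f,
      ENNReal.toReal_add (ENNReal.add_ne_top.2 ⟨h1f, h2f⟩) h3f,
      ENNReal.toReal_add h1f h2f]
    simp only [ENNReal.toReal_mul, ENNReal.toReal_ofReal ha.1, ENNReal.toReal_ofReal hb.1,
      ENNReal.toReal_ofReal (by linarith [ha.2] : (0:ℝ) ≤ 1 - a),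
      ENNReal.toReal_ofReal (by linarith [hb.2] : (0:ℝ) ≤ 1 - b)]
  rw [key, risk_self pP f hf (htf pP hPP pP hPP), risk_self pN f hf (htf pN hNN pN hNN)]
  have hadd := risk_add pP pN f hf (htf pP hPP pN hNN)
  have : rankRisk pN pP f = 1 - rankRisk pP pN f := by linarith
  rw [this]

/-- excess risk transfer, two sets: for tie-free `f, g`,
`R_PN(f) − R_PN(g) = (R_ij(f) − R_ij(g)) / (π_i − π_j)`. -/
theorem u2_excess_risk_transfer {X : Type*} [MeasurableSpace X]
    (pP pN : Measure X) [IsProbabilityMeasure pP] [IsProbabilityMeasure pN]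
    (πi πj : ℝ) (hπi : πi ∈ Set.Icc (0 : ℝ) 1) (hπj : πj ∈ Set.Icc (0 : ℝ) 1)
    (hij : πj < πi)
    (f g : X → ℝ) (hf : Measurable f) (hg : Measurable g)
    (htf : TieFree pP pN f) (htg : TieFree pP pN g) :
    rankRisk pP pN f - rankRisk pP pN g =
      (rankRisk (mix pP pN πi) (mix pP pN πj) f
        - rankRisk (mix pP pN πi) (mix pP pN πj) g) / (πi - πj) := by
  rw [rank_mix pP pN πi πj hπi hπj f hf htf, rank_mix pP pN πi πj hπi hπj g hg htg]
  have h : πi - πj ≠ 0 := by linarith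
  field_simp
  ring
end

section
/- (Deterministic skeleton of the U^m excess risk bound) Let π_1 ≥ … ≥ π_m be priors in [0,1], let z_ij > 0 for 1 ≤ i < j ≤ m with s = Σ_{1≤i<j≤m} z_ij·(π_i − π_j) > 0, let F be a set of measurable tie-free functions X → ℝ, and for each pair i < j let R̂_ij : F → ℝ satisfy sup_{f ∈ F} |R̂_ij(f) − R_ij(f)| ≤ ε_ij. If f̂ ∈ F minimizes the empirical risk Σ_{1≤i<j≤m} z_ij·R̂_ij(f) over F and f* ∈ F minimizes R_PN over F, then R_PN(f̂) − R_PN(f*) ≤ (2/s)·Σ_{1≤i<j≤m} z_ij·ε_ij. -/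
open MeasureTheory

section Aux

variable {X : Type*} [MeasurableSpace X]

lemma aux_prod_smul_left (c : ENNReal) (hc : c ≠ ⊤) (μ ν : Measure X)
    [IsFiniteMeasure μ] [IsFiniteMeasure ν] :
    (c • μ).prod ν = c • μ.prod ν := by
  haveI : IsFiniteMeasure (c • μ) :=
    ⟨by simpa [Measure.smul_apply] using ENNReal.mul_lt_top hc.lt_top (measure_lt_top μ _)⟩
  refine Measure.prod_eq (μ := c • μ) (ν := ν) fun s t hs ht => ?_
  simp [Measure.prod_prod, mul_assoc]

lemma aux_prod_smul_right (c : ENNReal) (hc : c ≠ ⊤) (μ ν : Measure X)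
    [IsFiniteMeasure μ] [IsFiniteMeasure ν] :
    μ.prod (c • ν) = c • μ.prod ν := by
  haveI : IsFiniteMeasure (c • ν) :=
    ⟨by simpa [Measure.smul_apply] using ENNReal.mul_lt_top hc.lt_top (measure_lt_top ν _)⟩
  refine Measure.prod_eq (μ := μ) (ν := c • ν) fun s t hs ht => ?_
  simp [Measure.prod_prod]
  ring

lemma aux_rank_mix (pP pN : Measure X) [IsProbabilityMeasure pP] [IsProbabilityMeasure pN]
    (f : X → ℝ) (a b : ℝ) (ha : a ∈ Set.Icc (0:ℝ) 1) (hb : b ∈ Set.Icc (0:ℝ) 1) :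
    rankRisk (mix pP pN a) (mix pP pN b) f =
      a * b * rankRisk pP pP f + a * (1-b) * rankRisk pP pN f +
      (1-a) * b * rankRisk pN pP f + (1-a) * (1-b) * rankRisk pN pN f := by
  have hA : (ENNReal.ofReal a) ≠ ⊤ := ENNReal.ofReal_ne_top
  have hA' : (ENNReal.ofReal (1-a)) ≠ ⊤ := ENNReal.ofReal_ne_top
  have hB : (ENNReal.ofReal b) ≠ ⊤ := ENNReal.ofReal_ne_top
  have hB' : (ENNReal.ofReal (1-b)) ≠ ⊤ := ENNReal.ofReal_ne_top
  haveI : IsFiniteMeasure (ENNReal.ofReal a • pP) :=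
    ⟨by simpa [Measure.smul_apply] using ENNReal.mul_lt_top hA.lt_top (measure_lt_top pP _)⟩
  haveI : IsFiniteMeasure (ENNReal.ofReal (1-a) • pN) :=
    ⟨by simpa [Measure.smul_apply] using ENNReal.mul_lt_top hA'.lt_top (measure_lt_top pN _)⟩
  haveI : IsFiniteMeasure (ENNReal.ofReal b • pP) :=
    ⟨by simpa [Measure.smul_apply] using ENNReal.mul_lt_top hB.lt_top (measure_lt_top pP _)⟩
  haveI : IsFiniteMeasure (ENNReal.ofReal (1-b) • pN) :=
    ⟨by simpa [Measure.smul_apply] using ENNReal.mul_lt_top hB'.lt_top (measure_lt_top pN _)⟩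
  have hprod : (mix pP pN a).prod (mix pP pN b) =
      (ENNReal.ofReal a * ENNReal.ofReal b) • pP.prod pP +
      (ENNReal.ofReal a * ENNReal.ofReal (1-b)) • pP.prod pN +
      ((ENNReal.ofReal (1-a) * ENNReal.ofReal b) • pN.prod pP +
      (ENNReal.ofReal (1-a) * ENNReal.ofReal (1-b)) • pN.prod pN) := by
    rw [mix, mix, Measure.add_prod, Measure.prod_add, Measure.prod_add,
      aux_prod_smul_right _ hB, aux_prod_smul_right _ hB',
      aux_prod_smul_right _ hB, aux_prod_smul_right _ hB',
      aux_prod_smul_left _ hA, aux_prod_smul_left _ hA',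
      aux_prod_smul_left _ hA, aux_prod_smul_left _ hA']
    simp [smul_smul, mul_comm]
  set S : Set (X × X) := {p : X × X | f p.1 < f p.2} with hSdef
  have key : ((mix pP pN a).prod (mix pP pN b)) S =
      ENNReal.ofReal a * ENNReal.ofReal b * pP.prod pP S +
      ENNReal.ofReal a * ENNReal.ofReal (1-b) * pP.prod pN S +
      (ENNReal.ofReal (1-a) * ENNReal.ofReal b * pN.prod pP S +
      ENNReal.ofReal (1-a) * ENNReal.ofReal (1-b) * pN.prod pN S) := by
    rw [hprod]; simp [Measure.add_apply, Measure.smul_apply, smul_eq_mul]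
  have fin : ∀ (μ ν : Measure X), IsProbabilityMeasure μ → IsProbabilityMeasure ν →
      ∀ c : ENNReal, c ≠ ⊤ → c * (μ.prod ν) S ≠ ⊤ := by
    intro μ ν h1 h2 c hc
    exact ENNReal.mul_ne_top hc (measure_ne_top _ _)
  rw [rankRisk, key]
  rw [ENNReal.toReal_add, ENNReal.toReal_add, ENNReal.toReal_add] <;>
    try first
      | exact fin _ _ inferInstance inferInstance _ (ENNReal.mul_ne_top ENNReal.ofReal_ne_top ENNReal.ofReal_ne_top)
      | exact ENNReal.add_ne_top.2 ⟨fin _ _ inferInstance inferInstance _ (ENNReal.mul_ne_top ENNReal.ofReal_ne_top ENNReal.ofReal_ne_top), fin _ _ inferInstance inferInstance _ (ENNReal.mul_ne_top ENNReal.ofReal_ne_top ENNReal.ofReal_ne_top)⟩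
  simp only [ENNReal.toReal_mul, ENNReal.toReal_ofReal ha.1, ENNReal.toReal_ofReal hb.1,
    ENNReal.toReal_ofReal (by linarith [ha.2] : (0:ℝ) ≤ 1 - a),
    ENNReal.toReal_ofReal (by linarith [hb.2] : (0:ℝ) ≤ 1 - b)]
  rw [rankRisk, rankRisk, rankRisk, rankRisk]
  ring

lemma aux_rank_swap (μ ν : Measure X) [IsProbabilityMeasure μ] [IsProbabilityMeasure ν]
    (f : X → ℝ) (hf : Measurable f)
    (htie : (μ.prod ν) {p : X × X | f p.1 = f p.2} = 0) :
    rankRisk ν μ f = 1 - rankRisk μ ν f := by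
  have hS : MeasurableSet {p : X × X | f p.1 < f p.2} :=
    measurableSet_lt (hf.comp measurable_fst) (hf.comp measurable_snd)
  have hSgt : MeasurableSet {p : X × X | f p.2 < f p.1} :=
    measurableSet_lt (hf.comp measurable_snd) (hf.comp measurable_fst)
  have hswap : (ν.prod μ) {p : X × X | f p.1 < f p.2} =
      (μ.prod ν) {p : X × X | f p.2 < f p.1} := by
    have h := (Measure.measurePreserving_swap (μ := μ) (ν := ν)).measure_preimage
      (s := {p : X × X | f p.1 < f p.2}) hS.nullMeasurableSet
    have : Prod.swap ⁻¹' {p : X × X | f p.1 < f p.2} = {p : X × X | f p.2 < f p.1} := by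
      ext p; simp [Prod.swap]
    rw [this] at h
    exact h.symm
  have hcompl : {p : X × X | f p.1 < f p.2}ᶜ =
      {p : X × X | f p.2 < f p.1} ∪ {p : X × X | f p.1 = f p.2} := by
    ext p
    simp only [Set.mem_compl_iff, Set.mem_setOf_eq, Set.mem_union, not_lt]
    constructor
    · intro h
      rcases lt_or_eq_of_le h with h' | h'
      · exact Or.inl h'
      · exact Or.inr h'.symm
    · rintro (h | h) <;> [exact h.le; exact h.ge]
  have h1 : (μ.prod ν) {p : X × X | f p.1 < f p.2}ᶜ =
      1 - (μ.prod ν) {p : X × X | f p.1 < f p.2} := prob_compl_eq_one_sub hS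
  have hununull : (μ.prod ν) ({p : X × X | f p.2 < f p.1} ∪ {p : X × X | f p.1 = f p.2}) =
      (μ.prod ν) {p : X × X | f p.2 < f p.1} :=
    le_antisymm ((measure_union_le _ _).trans (by simp [htie]))
      (measure_mono Set.subset_union_left)
  rw [hcompl, hununull] at h1
  rw [rankRisk, rankRisk, hswap, h1, ENNReal.toReal_sub_of_le (prob_le_one) ENNReal.one_ne_top]
  simp

lemma aux_rank_self (μ : Measure X) [IsProbabilityMeasure μ]
    (f : X → ℝ) (hf : Measurable f)
    (htie : (μ.prod μ) {p : X × X | f p.1 = f p.2} = 0) :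
    rankRisk μ μ f = 1/2 := by
  have := aux_rank_swap μ μ f hf htie
  linarith

lemma aux_rank_mix_identity (pP pN : Measure X)
    [IsProbabilityMeasure pP] [IsProbabilityMeasure pN]
    (f : X → ℝ) (hf : Measurable f) (htf : TieFree pP pN f)
    (a b : ℝ) (ha : a ∈ Set.Icc (0:ℝ) 1) (hb : b ∈ Set.Icc (0:ℝ) 1) :
    rankRisk (mix pP pN a) (mix pP pN b) f =
      (a - b) * rankRisk pP pN f + (a*b/2 + (1-a)*b + (1-a)*(1-b)/2) := by
  have hPmem : pP ∈ ({pP, pN} : Set (Measure X)) := Set.mem_insert _ _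
  have hNmem : pN ∈ ({pP, pN} : Set (Measure X)) := Set.mem_insert_of_mem _ rfl
  have hPP := aux_rank_self pP f hf (htf pP hPmem pP hPmem)
  have hNN := aux_rank_self pN f hf (htf pN hNmem pN hNmem)
  have hNP : rankRisk pN pP f = 1 - rankRisk pP pN f :=
    aux_rank_swap pP pN f hf (htf pP hPmem pN hNmem)
  rw [aux_rank_mix pP pN f a b ha hb, hPP, hNN, hNP]
  ring

end Aux

/-- deterministic skeleton of the U^m excess risk bound: if each
pairwise empirical risk `R̂_ij` deviates from `R_ij` by at most `ε_ij` uniformly over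
`F`, then the minimizer `f̂` of the weighted empirical risk satisfies
`R_PN(f̂) − R_PN(f*) ≤ (2/s)·Σ_{i<j} z_ij·ε_ij`. -/
theorem um_excess_risk_skeleton {X : Type*} [MeasurableSpace X]
    (pP pN : Measure X) [IsProbabilityMeasure pP] [IsProbabilityMeasure pN]
    (m : ℕ) (π : Fin m → ℝ) (hπ : ∀ i, π i ∈ Set.Icc (0 : ℝ) 1)
    (hdec : Antitone π)
    (z : Fin m → Fin m → ℝ) (hz : ∀ i j, i < j → 0 < z i j)
    (hs : 0 < ∑ i : Fin m, ∑ j ∈ Finset.Ioi i, z i j * (π i - π j))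
    (F : Set (X → ℝ))
    (hF : ∀ f ∈ F, Measurable f ∧ TieFree pP pN f)
    (Rhat : Fin m → Fin m → (X → ℝ) → ℝ) (ε : Fin m → Fin m → ℝ)
    (hdev : ∀ i : Fin m, ∀ j ∈ Finset.Ioi i, ∀ f ∈ F,
      |Rhat i j f - rankRisk (mix pP pN (π i)) (mix pP pN (π j)) f| ≤ ε i j)
    (fhat : X → ℝ) (hfhat : fhat ∈ F)
    (hfhat_min : ∀ f ∈ F,
      (∑ i : Fin m, ∑ j ∈ Finset.Ioi i, z i j * Rhat i j fhat) ≤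
        ∑ i : Fin m, ∑ j ∈ Finset.Ioi i, z i j * Rhat i j f)
    (fstar : X → ℝ) (hfstar : fstar ∈ F)
    (hfstar_min : ∀ f ∈ F, rankRisk pP pN fstar ≤ rankRisk pP pN f) :
    rankRisk pP pN fhat - rankRisk pP pN fstar ≤
      (2 / ∑ i : Fin m, ∑ j ∈ Finset.Ioi i, z i j * (π i - π j)) *
        ∑ i : Fin m, ∑ j ∈ Finset.Ioi i, z i j * ε i j := by
  set s := ∑ i : Fin m, ∑ j ∈ Finset.Ioi i, z i j * (π i - π j) with hsdef
  set E := ∑ i : Fin m, ∑ j ∈ Finset.Ioi i, z i j * ε i j with hEdef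
  set R1 := rankRisk pP pN fhat with hR1
  set R2 := rankRisk pP pN fstar with hR2
  obtain ⟨hmeas1, htf1⟩ := hF fhat hfhat
  obtain ⟨hmeas2, htf2⟩ := hF fstar hfstar
  -- identity for each pair
  have hid : ∀ (f : X → ℝ), Measurable f → TieFree pP pN f → ∀ i j : Fin m,
      rankRisk (mix pP pN (π i)) (mix pP pN (π j)) f =
        (π i - π j) * rankRisk pP pN f +
        (π i * π j / 2 + (1 - π i) * π j + (1 - π i) * (1 - π j) / 2) :=
    fun f hm ht i j => aux_rank_mix_identity pP pN f hm ht (π i) (π j) (hπ i) (hπ j)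
  -- key inequality : s * (R1 - R2) ≤ 2 * E
  have key : s * (R1 - R2) ≤ 2 * E := by
    have hsum_eq : (∑ i : Fin m, ∑ j ∈ Finset.Ioi i,
        z i j * rankRisk (mix pP pN (π i)) (mix pP pN (π j)) fhat) -
        (∑ i : Fin m, ∑ j ∈ Finset.Ioi i,
        z i j * rankRisk (mix pP pN (π i)) (mix pP pN (π j)) fstar) = s * (R1 - R2) := by
      rw [hsdef, ← Finset.sum_sub_distrib, Finset.sum_mul]
      refine Finset.sum_congr rfl fun i _ => ?_
      rw [← Finset.sum_sub_distrib, Finset.sum_mul]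
      refine Finset.sum_congr rfl fun j hj => ?_
      rw [hid fhat hmeas1 htf1 i j, hid fstar hmeas2 htf2 i j]
      ring
    have h1 : ∑ i : Fin m, ∑ j ∈ Finset.Ioi i,
        z i j * rankRisk (mix pP pN (π i)) (mix pP pN (π j)) fhat ≤
        (∑ i : Fin m, ∑ j ∈ Finset.Ioi i, z i j * Rhat i j fhat) + E := by
      rw [hEdef, ← Finset.sum_add_distrib]
      refine Finset.sum_le_sum fun i _ => ?_
      rw [← Finset.sum_add_distrib]
      refine Finset.sum_le_sum fun j hj => ?_
      have hd := hdev i j hj fhat hfhat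
      have hzp := hz i j (Finset.mem_Ioi.1 hj)
      have := abs_le.1 hd
      nlinarith [this.1, this.2]
    have h2 : ∑ i : Fin m, ∑ j ∈ Finset.Ioi i, z i j * Rhat i j fstar ≤
        (∑ i : Fin m, ∑ j ∈ Finset.Ioi i,
        z i j * rankRisk (mix pP pN (π i)) (mix pP pN (π j)) fstar) + E := by
      rw [hEdef, ← Finset.sum_add_distrib]
      refine Finset.sum_le_sum fun i _ => ?_
      rw [← Finset.sum_add_distrib]
      refine Finset.sum_le_sum fun j hj => ?_
      have hd := hdev i j hj fstar hfstar
      have hzp := hz i j (Finset.mem_Ioi.1 hj)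
      have := abs_le.1 hd
      nlinarith [this.1, this.2]
    have h3 := hfhat_min fstar hfstar
    linarith [hsum_eq, h1, h2, h3]
  have h4 : R1 - R2 ≤ 2 * E / s := by
    rw [le_div_iff₀ hs]
    linarith [key]
  calc R1 - R2 ≤ 2 * E / s := h4
    _ = (2 / s) * E := by ring
end

section
/- (Finite square-loss AUC decomposition) Let P and N be nonempty finite subsets of X and f : X → ℝ. Let a = (1/|P|)·Σ_{x∈P} f(x) and b = (1/|N|)·Σ_{x'∈N} f(x'). Then (1/(|P||N|))·Σ_{x∈P} Σ_{x'∈N} (1 − f(x) + f(x'))² = (1/|P|)·Σ_{x∈P} (f(x) − a)² + (1/|N|)·Σ_{x'∈N} (f(x') − b)² + (1 − a + b)². -/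
/-!
Write `1 - f x + f x' = (a - f x) + (f x' - b) + (1 - a + b)`. The first two summands have
zero sum over `P` and over `N` respectively, so on expanding the square and summing over
`P × N` all three cross terms vanish, leaving the two variances and the squared mean.
-/

open Finset

theorem Finset.sum_sub_mean_eq_zero {ι K : Type*} [Field K] {s : Finset ι}
    (hs : (s.card : K) ≠ 0) (g : ι → K) :
    ∑ i ∈ s, (g i - (1 : K) / s.card * ∑ j ∈ s, g j) = 0 := by
  rw [sum_sub_distrib, sum_const, nsmul_eq_mul]
  field_simp
  ring

theorem Finset.sum_sum_sq_add_add_of_sum_eq_zero {ι κ R : Type*} [CommRing R]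
    {s : Finset ι} {t : Finset κ} {u : ι → R} {v : κ → R}
    (hu : ∑ i ∈ s, u i = 0) (hv : ∑ j ∈ t, v j = 0) (c : R) :
    ∑ i ∈ s, ∑ j ∈ t, (u i + v j + c) ^ 2 =
      t.card * ∑ i ∈ s, u i ^ 2 + s.card * ∑ j ∈ t, v j ^ 2 + s.card * t.card * c ^ 2 := by
  have inner : ∀ i, ∑ j ∈ t, (u i + v j + c) ^ 2 =
      t.card * u i ^ 2 + ∑ j ∈ t, v j ^ 2 + t.card * c ^ 2 + t.card * (2 * c * u i) := by
    intro i
    have expand : ∀ j, (u i + v j + c) ^ 2 =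
        u i ^ 2 + v j ^ 2 + c ^ 2 + 2 * c * u i + 2 * (u i + c) * v j := fun _ => by ring
    simp only [expand, sum_add_distrib, sum_const, nsmul_eq_mul, ← mul_sum, hv]
    ring
  simp only [inner, sum_add_distrib, ← mul_sum, sum_const, nsmul_eq_mul, hu]
  ring

/-- finite square-loss AUC decomposition: for nonempty finite sets
`P`, `N` and a score `f`, with `a`, `b` the averages of `f` over `P` and `N`,
`(1/(|P||N|))·Σ_{x∈P} Σ_{x'∈N} (1 − f(x) + f(x'))²
  = (1/|P|)·Σ_{x∈P} (f(x) − a)² + (1/|N|)·Σ_{x'∈N} (f(x') − b)² + (1 − a + b)²`. -/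
theorem finite_square_loss_auc_decomposition {X : Type*}
    (P N : Finset X) (hP : P.Nonempty) (hN : N.Nonempty) (f : X → ℝ) :
    ((1 : ℝ) / ((P.card : ℝ) * (N.card : ℝ))) *
        ∑ x ∈ P, ∑ x' ∈ N, (1 - f x + f x') ^ 2 =
      ((1 : ℝ) / (P.card : ℝ)) *
          ∑ x ∈ P, (f x - ((1 : ℝ) / (P.card : ℝ)) * ∑ y ∈ P, f y) ^ 2
      + ((1 : ℝ) / (N.card : ℝ)) *
          ∑ x' ∈ N, (f x' - ((1 : ℝ) / (N.card : ℝ)) * ∑ y ∈ N, f y) ^ 2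
      + (1 - ((1 : ℝ) / (P.card : ℝ)) * ∑ y ∈ P, f y
          + ((1 : ℝ) / (N.card : ℝ)) * ∑ y ∈ N, f y) ^ 2 := by
  have hp : (P.card : ℝ) ≠ 0 := Nat.cast_ne_zero.mpr hP.card_ne_zero
  have hn : (N.card : ℝ) ≠ 0 := Nat.cast_ne_zero.mpr hN.card_ne_zero
  set a := (1 : ℝ) / P.card * ∑ y ∈ P, f y
  set b := (1 : ℝ) / N.card * ∑ y ∈ N, f y
  have hsplit : ∀ x x', 1 - f x + f x' = -(f x - a) + (f x' - b) + (1 - a + b) :=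
    fun _ _ => by ring
  have hP0 : ∑ x ∈ P, -(f x - a) = 0 := by
    rw [sum_neg_distrib, sum_sub_mean_eq_zero hp, neg_zero]
  have hN0 : ∑ x' ∈ N, (f x' - b) = 0 := sum_sub_mean_eq_zero hn f
  simp only [hsplit]
  rw [sum_sum_sq_add_add_of_sum_eq_zero hP0 hN0]
  simp only [neg_sq]
  field_simp
end

section
/- (Min–max reformulation of the square-loss AUC objective) Let μ and ν be probability measures on X, p ∈ (0,1), and f : X → ℝ measurable and square-integrable with respect to both μ and ν. For a, b, α ∈ ℝ define h(a,b,α) = (1−p)·p·∫(f(x)−a)² dμ(x) + p·(1−p)·∫(f(x')−b)² dν(x') − p(1−p)·α² + 2α·( p(1−p) + p(1−p)·∫ f dν − p(1−p)·∫ f dμ ). Then min over a, b ∈ ℝ of max over α ∈ ℝ of h(a,b,α) is attained at a = ∫ f dμ, b = ∫ f dν, α = 1 − ∫ f dμ + ∫ f dν, and equals p(1−p)·∫∫ (1 − f(x) + f(x'))² dμ(x) dν(x'). -/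
open MeasureTheory

/-- The saddle objective
`h(a,b,α) = (1−p)p·∫(f−a)² dμ + p(1−p)·∫(f−b)² dν − p(1−p)α²
            + 2α·(p(1−p) + p(1−p)·∫f dν − p(1−p)·∫f dμ)`. -/
noncomputable def hObj {X : Type*} [MeasurableSpace X]
    (μ ν : Measure X) (p : ℝ) (f : X → ℝ) (a b α : ℝ) : ℝ :=
  (1 - p) * p * ∫ x, (f x - a) ^ 2 ∂μ
  + p * (1 - p) * ∫ x', (f x' - b) ^ 2 ∂ν
  - p * (1 - p) * α ^ 2
  + 2 * α * (p * (1 - p) + p * (1 - p) * (∫ y, f y ∂ν) - p * (1 - p) * ∫ y, f y ∂μ)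

/-- Integral of a quadratic polynomial of `f` against a probability measure. -/
lemma integral_quad {X : Type*} [MeasurableSpace X]
    (μ : Measure X) [IsProbabilityMeasure μ] (f : X → ℝ)
    (h1 : Integrable f μ) (h2 : Integrable (fun x => f x ^ 2) μ) (A B C : ℝ) :
    ∫ x, (A + B * f x + C * f x ^ 2) ∂μ
      = A + B * (∫ x, f x ∂μ) + C * ∫ x, f x ^ 2 ∂μ := by
  have i1 : Integrable (fun x => A + B * f x) μ := (integrable_const A).add (h1.const_mul B)
  rw [integral_add i1 (h2.const_mul C),
    integral_add (integrable_const A) (h1.const_mul B),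
    integral_const, MeasureTheory.integral_const_mul, MeasureTheory.integral_const_mul]
  simp

/-- min–max reformulation of the square-loss AUC objective:
`min_{a,b} max_α h(a,b,α)` is attained at `a = ∫f dμ`, `b = ∫f dν`,
`α = 1 − ∫f dμ + ∫f dν`, and equals `p(1−p)·∫∫(1 − f(x) + f(x'))² dμ(x) dν(x')`:
for every `(a,b)` the inner maximum over `α` is attained at `α* = 1 − ∫f dμ + ∫f dν`,
the outer minimum of `α ↦ h(·,·,α*)` is attained at `(a*,b*)`, and the saddle value
is the stated one. -/
theorem min_max_square_loss_auc {X : Type*} [MeasurableSpace X]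
    (μ ν : Measure X) [IsProbabilityMeasure μ] [IsProbabilityMeasure ν]
    (p : ℝ) (hp : p ∈ Set.Ioo (0 : ℝ) 1)
    (f : X → ℝ) (hf : Measurable f)
    (hfμ : MemLp f 2 μ) (hfν : MemLp f 2 ν) :
    (∀ a b α : ℝ, hObj μ ν p f a b α ≤
        hObj μ ν p f a b (1 - (∫ y, f y ∂μ) + ∫ y, f y ∂ν))
    ∧ (∀ a b : ℝ,
        hObj μ ν p f (∫ y, f y ∂μ) (∫ y, f y ∂ν)
            (1 - (∫ y, f y ∂μ) + ∫ y, f y ∂ν) ≤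
          hObj μ ν p f a b (1 - (∫ y, f y ∂μ) + ∫ y, f y ∂ν))
    ∧ hObj μ ν p f (∫ y, f y ∂μ) (∫ y, f y ∂ν)
          (1 - (∫ y, f y ∂μ) + ∫ y, f y ∂ν) =
        p * (1 - p) * ∫ x, ∫ x', (1 - f x + f x') ^ 2 ∂ν ∂μ := by
  have h1μ : Integrable f μ := hfμ.integrable one_le_two
  have h1ν : Integrable f ν := hfν.integrable one_le_two
  have h2μ : Integrable (fun x => f x ^ 2) μ := hfμ.integrable_sq
  have h2ν : Integrable (fun x => f x ^ 2) ν := hfν.integrable_sq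
  set Iμ := ∫ y, f y ∂μ with hIμ
  set Iν := ∫ y, f y ∂ν with hIν
  set Sμ := ∫ y, f y ^ 2 ∂μ with hSμ
  set Sν := ∫ y, f y ^ 2 ∂ν with hSν
  have hk : 0 < p * (1 - p) := mul_pos hp.1 (sub_pos.2 hp.2)
  -- expansion of ∫ (f - a)^2
  have expμ : ∀ a : ℝ, ∫ x, (f x - a) ^ 2 ∂μ = a ^ 2 - 2 * a * Iμ + Sμ := by
    intro a
    have : ∀ x, (f x - a) ^ 2 = a ^ 2 + (-(2 * a)) * f x + 1 * f x ^ 2 := by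
      intro x; ring
    simp_rw [this]
    rw [integral_quad μ f h1μ h2μ]
    ring
  have expν : ∀ b : ℝ, ∫ x, (f x - b) ^ 2 ∂ν = b ^ 2 - 2 * b * Iν + Sν := by
    intro b
    have : ∀ x, (f x - b) ^ 2 = b ^ 2 + (-(2 * b)) * f x + 1 * f x ^ 2 := by
      intro x; ring
    simp_rw [this]
    rw [integral_quad ν f h1ν h2ν]
    ring
  -- the double integral
  have inner : ∀ x : X, ∫ x', (1 - f x + f x') ^ 2 ∂ν
      = (1 - f x) ^ 2 + 2 * (1 - f x) * Iν + Sν := by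
    intro x
    have : ∀ x', (1 - f x + f x') ^ 2
        = (1 - f x) ^ 2 + (2 * (1 - f x)) * f x' + 1 * f x' ^ 2 := by
      intro x'; ring
    simp_rw [this]
    rw [integral_quad ν f h1ν h2ν]
    ring
  have douter : ∫ x, ∫ x', (1 - f x + f x') ^ 2 ∂ν ∂μ
      = 1 + 2 * Iν + Sν + (-2 - 2 * Iν) * Iμ + Sμ := by
    have : ∀ x : X, ∫ x', (1 - f x + f x') ^ 2 ∂ν
        = (1 + 2 * Iν + Sν) + (-2 - 2 * Iν) * f x + 1 * f x ^ 2 := by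
      intro x; rw [inner x]; ring
    simp_rw [this]
    rw [integral_quad μ f h1μ h2μ]
    ring
  refine ⟨?_, ?_, ?_⟩
  · intro a b α
    simp only [hObj, ← hIμ, ← hIν]
    nlinarith [sq_nonneg (1 - Iμ + Iν - α), hk]
  · intro a b
    simp only [hObj, ← hIμ, ← hIν, expμ, expν]
    nlinarith [sq_nonneg (a - Iμ), sq_nonneg (b - Iν), hk]
  · simp only [hObj, ← hIμ, ← hIν, expμ, expν, douter]
    ring
end
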